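/- Let Z ∈ ℝ^{d×n}, let Ψ ∈ ℝ^{d×n} be a perturbation, and set Z' = Z + Ψ. Then for any r ≤ d, ‖(Z')_r − Z‖_F ≤ √2 ‖Z_r − Z‖_F + (1 + √2) ‖Ψ‖_F, where A_r denotes a best rank-r Frobenius approximation of A. -/

import Mathlib

open Matrix

noncomputable def frob {m n : Type*} [Fintype m] [Fintype n]
    (A : Matrix m n ℝ) : ℝ :=
  Real.sqrt (∑ i, ∑ j, (A i j) ^ 2)


noncomputable def toE {m n : Type*} [Fintype m] [Fintype n] (A : Matrix m n ℝ) :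
    EuclideanSpace ℝ (m × n) :=
  (WithLp.equiv 2 _).symm (fun p : m × n => A p.1 p.2)

lemma frob_eq_norm {m n : Type*} [Fintype m] [Fintype n] (A : Matrix m n ℝ) :
    frob A = ‖toE A‖ := by
  rw [EuclideanSpace.norm_eq, frob]
  congr 1
  rw [Fintype.sum_prod_type]
  simp [toE, Real.norm_eq_abs, sq_abs]

lemma toE_add {m n : Type*} [Fintype m] [Fintype n] (A B : Matrix m n ℝ) :
    toE (A + B) = toE A + toE B := by
  ext p; simp [toE]

lemma toE_neg {m n : Type*} [Fintype m] [Fintype n] (A : Matrix m n ℝ) :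
    toE (-A) = -toE A := by
  ext p; simp [toE]

lemma frob_nonneg {m n : Type*} [Fintype m] [Fintype n] (A : Matrix m n ℝ) : 0 ≤ frob A :=
  Real.sqrt_nonneg _

lemma frob_add_le {m n : Type*} [Fintype m] [Fintype n] (A B : Matrix m n ℝ) :
    frob (A + B) ≤ frob A + frob B := by
  simp only [frob_eq_norm, toE_add]; exact norm_add_le _ _

lemma frob_neg {m n : Type*} [Fintype m] [Fintype n] (A : Matrix m n ℝ) :
    frob (-A) = frob A := by
  simp only [frob_eq_norm, toE_neg, norm_neg]


/-- `B` is a best rank-`r` approximation of `A` in Frobenius norm. -/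
def IsBestRankApprox {m n : Type*} [Fintype m] [Fintype n] [DecidableEq m] [DecidableEq n]
    (r : ℕ) (B A : Matrix m n ℝ) : Prop :=
  B.rank ≤ r ∧ ∀ C : Matrix m n ℝ, C.rank ≤ r → frob (B - A) ≤ frob (C - A)

/-- `σ` lists the singular values of `A` in decreasing order: it is antitone,
nonnegative, and the multiset of its squares is the multiset of eigenvalues of
the Gram matrix `Aᴴ A`. -/
def IsSingularValues {m n : Type*} [Fintype m] [Fintype n] [DecidableEq n]
    (A : Matrix m n ℝ) (σ : n → ℝ) [LinearOrder n] : Prop :=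
  Antitone σ ∧ (∀ j, 0 ≤ σ j) ∧
    Finset.univ.val.map (fun j => σ j ^ 2) =
      Finset.univ.val.map (show (Aᵀ * A).IsHermitian by
        simpa [Matrix.conjTranspose_eq_transpose_of_trivial] using
          Matrix.isHermitian_conjTranspose_mul_self A).eigenvalues

/-- for `Z' = Z + Ψ`,
`‖(Z')_r − Z‖_F ≤ √2 ‖Z_r − Z‖_F + (1 + √2) ‖Ψ‖_F`. -/
theorem stmt_11 {d n : ℕ} (r : ℕ) (hr : r ≤ d)
    (Z Ψ Z' Zr Z'r : Matrix (Fin d) (Fin n) ℝ)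
    (hZ' : Z' = Z + Ψ)
    (hZr : IsBestRankApprox r Zr Z)
    (hZ'r : IsBestRankApprox r Z'r Z') :
    frob (Z'r - Z) ≤ Real.sqrt 2 * frob (Zr - Z) + (1 + Real.sqrt 2) * frob Ψ := by
  have h1 : Z'r - Z = (Z'r - Z') + Ψ := by rw [hZ']; abel
  have h2 : Zr - Z' = (Zr - Z) + (-Ψ) := by rw [hZ']; abel
  have t1 : frob (Z'r - Z) ≤ frob (Z'r - Z') + frob Ψ := by
    rw [h1]; exact frob_add_le _ _
  have t2 : frob (Z'r - Z') ≤ frob (Zr - Z') := hZ'r.2 Zr hZr.1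
  have t3 : frob (Zr - Z') ≤ frob (Zr - Z) + frob Ψ := by
    rw [h2]
    calc frob ((Zr - Z) + (-Ψ)) ≤ frob (Zr - Z) + frob (-Ψ) := frob_add_le _ _
    _ = frob (Zr - Z) + frob Ψ := by rw [frob_neg]
  have hs : (1:ℝ) ≤ Real.sqrt 2 := by
    nlinarith [Real.sq_sqrt (by norm_num : (2:ℝ) ≥ 0), Real.sqrt_nonneg 2]
  nlinarith [frob_nonneg (Zr - Z), frob_nonneg Ψ]
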